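/- If α: |T₁| → |T₂| is an ε-good map between merge trees and a point w ∈ |T₂| is not in the image of α, then no descendant of w is in the image of α; consequently |T₂| \ Img(α) is a union of rooted subtrees of T₂. -/
import Mathlib


/-- An abstract merge tree: a set of points with an ancestor relation `le`
(`le u v` means `v` is `u` or an ancestor of `u`), a height function `f`
strictly increasing towards the root, nearest common ancestors `nca`,
and for every point `u` and `δ ≥ 0` the unique ancestor `up u δ` of `u`
at height `f u + δ`. -/
structure MergeTree where
  X : Type
  le : X → X → Prop
  le_refl : ∀ u, le u u
  le_trans : ∀ u v w, le u v → le v w → le u w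
  le_antisymm : ∀ u v, le u v → le v u → u = v
  f : X → ℝ
  f_strictMono : ∀ u v, le u v → u ≠ v → f u < f v
  nca : X → X → X
  le_nca_left : ∀ u v, le u (nca u v)
  le_nca_right : ∀ u v, le v (nca u v)
  nca_min : ∀ u v w, le u w → le v w → le (nca u v) w
  up : X → ℝ → X
  le_up : ∀ u δ, 0 ≤ δ → le u (up u δ)
  f_up : ∀ u δ, 0 ≤ δ → f (up u δ) = f u + δ
  up_unique : ∀ u δ v, 0 ≤ δ → le u v → f v = f u + δ → v = up u δ

namespace MergeTree

/-- The path metric `d_T(u,p) = f(NCA(u,p)) − min{f u, f p}` on a merge tree. -/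
noncomputable def dist (T : MergeTree) (u p : T.X) : ℝ :=
  T.f (T.nca u p) - min (T.f u) (T.f p)

end MergeTree

/-- Continuity of a map between merge trees with respect to the tree metrics. -/
def TreeContinuous (T₁ T₂ : MergeTree) (α : T₁.X → T₂.X) : Prop :=
  ∀ u : T₁.X, ∀ R : ℝ, 0 < R → ∃ r : ℝ, 0 < r ∧
    ∀ p : T₁.X, T₁.dist u p < r → T₂.dist (α u) (α p) < R

/-- A pair of ε-interleaved (compatible continuous) maps between merge trees:
(C1) g(α u) = f u + ε, (C2) β(α u) = u^{2ε}, (C3) f(β w) = g w + ε,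
(C4) α(β w) = w^{2ε}. -/
def Interleaved (T₁ T₂ : MergeTree) (α : T₁.X → T₂.X) (β : T₂.X → T₁.X)
    (ε : ℝ) : Prop :=
  0 ≤ ε ∧ TreeContinuous T₁ T₂ α ∧ TreeContinuous T₂ T₁ β ∧
  (∀ u, T₂.f (α u) = T₁.f u + ε) ∧
  (∀ u, β (α u) = T₁.up u (2 * ε)) ∧
  (∀ w, T₁.f (β w) = T₂.f w + ε) ∧
  (∀ w, α (β w) = T₂.up w (2 * ε))

/-- The interleaving distance between merge trees: the infimum of all ε ≥ 0
admitting a pair of ε-interleaved maps. -/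
noncomputable def dID (T₁ T₂ : MergeTree) : ℝ :=
  sInf {ε : ℝ | ∃ α β, Interleaved T₁ T₂ α β ε}

/-- An ε-good map `α`, with `wA w` the nearest ancestor of `w` in `Img α`:
(S1) g(α u) = f u + ε; (S2) α u₁ ⪯ α u₂ → u₁^{2ε} ⪯ u₂^{2ε};
(S3) for w ∉ Img α, g(wA w) − g w ≤ 2ε. -/
def GoodMap (T₁ T₂ : MergeTree) (α : T₁.X → T₂.X) (wA : T₂.X → T₂.X)
    (ε : ℝ) : Prop :=
  0 ≤ ε ∧ TreeContinuous T₁ T₂ α ∧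
  (∀ u, T₂.f (α u) = T₁.f u + ε) ∧
  (∀ u₁ u₂, T₂.le (α u₁) (α u₂) → T₁.le (T₁.up u₁ (2 * ε)) (T₁.up u₂ (2 * ε))) ∧
  (∀ w, w ∉ Set.range α →
    T₂.le w (wA w) ∧ wA w ∈ Set.range α ∧
    (∀ w', T₂.le w w' → w' ∈ Set.range α → T₂.le (wA w) w') ∧
    T₂.f (wA w) - T₂.f w ≤ 2 * ε)

namespace MergeTree

lemma f_mono (T : MergeTree) {u v : T.X} (h : T.le u v) : T.f u ≤ T.f v := by
  rcases eq_or_ne u v with rfl | hne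
  · exact le_rfl
  · exact (T.f_strictMono u v h hne).le

lemma eq_of_le_of_f_le (T : MergeTree) {u v : T.X} (h : T.le u v)
    (hf : T.f v ≤ T.f u) : u = v := by
  by_contra hne
  exact absurd hf (not_le.2 (T.f_strictMono u v h hne))

/-- Two ancestors of a common point are comparable (the lower one is below). -/
lemma le_of_common_desc (T : MergeTree) {u v w : T.X} (hv : T.le u v) (hw : T.le u w)
    (hf : T.f v ≤ T.f w) : T.le v w := by
  have h1 : 0 ≤ T.f v - T.f u := by linarith [T.f_mono hv]
  have h2 : 0 ≤ T.f w - T.f u := by linarith [T.f_mono hv]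
  have hv' : v = T.up u (T.f v - T.f u) := T.up_unique u _ v h1 hv (by ring)
  have hw' : w = T.up u (T.f w - T.f u) := T.up_unique u _ w h2 hw (by ring)
  set δ₁ := T.f v - T.f u
  set δ₂ := T.f w - T.f u
  have h12 : 0 ≤ δ₂ - δ₁ := by simp only [δ₁, δ₂]; linarith
  have hx1 : T.le (T.up u δ₁) (T.up (T.up u δ₁) (δ₂ - δ₁)) := T.le_up _ _ h12
  have hux : T.le u (T.up (T.up u δ₁) (δ₂ - δ₁)) :=
    T.le_trans _ _ _ (T.le_up u δ₁ h1) hx1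
  have hfx : T.f (T.up (T.up u δ₁) (δ₂ - δ₁)) = T.f u + δ₂ := by
    rw [T.f_up _ _ h12, T.f_up u δ₁ h1]; ring
  have hxw : T.up (T.up u δ₁) (δ₂ - δ₁) = T.up u δ₂ := T.up_unique u δ₂ _ h2 hux hfx
  rw [hv', hw', ← hxw]
  exact hx1

lemma nca_eq_right (T : MergeTree) {a b : T.X} (h : T.le a b) : T.nca a b = b :=
  T.le_antisymm _ _ (T.nca_min a b b h (T.le_refl b)) (T.le_nca_right a b)

lemma nca_eq_left (T : MergeTree) {a b : T.X} (h : T.le b a) : T.nca a b = a :=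
  T.le_antisymm _ _ (T.nca_min a b a (T.le_refl a) h) (T.le_nca_left a b)

lemma le_up_up (T : MergeTree) (u : T.X) {s t : ℝ} (hs : 0 ≤ s) (hst : s ≤ t) :
    T.le (T.up u s) (T.up u t) :=
  T.le_of_common_desc (T.le_up u s hs) (T.le_up u t (hs.trans hst))
    (by rw [T.f_up u s hs, T.f_up u t (hs.trans hst)]; linarith)

lemma dist_up (T : MergeTree) (u : T.X) {s t : ℝ} (hs : 0 ≤ s) (ht : 0 ≤ t) :
    T.dist (T.up u s) (T.up u t) = |s - t| := by
  rcases le_total s t with hst | hst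
  · have h := T.le_up_up u hs hst
    unfold dist
    rw [T.nca_eq_right h, T.f_up u s hs, T.f_up u t ht,
      min_eq_left (by linarith : T.f u + s ≤ T.f u + t), abs_of_nonpos (by linarith)]
    ring
  · have h := T.le_up_up u ht hst
    unfold dist
    rw [T.nca_eq_left h, T.f_up u s hs, T.f_up u t ht,
      min_eq_right (by linarith : T.f u + t ≤ T.f u + s), abs_of_nonneg (by linarith)]
    ring

end MergeTree

/-- If α is an ε-good map and w ∉ Img α, then no descendant of w
is in Img α; hence |T₂| \ Img α is a union of rooted subtrees. -/
theorem stmt7 (T₁ T₂ : MergeTree) (α : T₁.X → T₂.X) (wA : T₂.X → T₂.X)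
    (ε : ℝ) (hα : GoodMap T₁ T₂ α wA ε) :
    ∀ w : T₂.X, w ∉ Set.range α →
      ∀ w' : T₂.X, T₂.le w' w → w' ≠ w → w' ∉ Set.range α := by
  obtain ⟨-, hcont, hS1, -, -⟩ := hα
  intro w hw w' hlew hne hmem
  obtain ⟨u, hu⟩ := hmem
  -- notation
  set γ : ℝ → T₂.X := fun t => α (T₁.up u t) with hγ
  have hup0 : T₁.up u 0 = u := (T₁.up_unique u 0 u le_rfl (T₁.le_refl u) (by ring)).symm
  have hγf : ∀ t : ℝ, 0 ≤ t → T₂.f (γ t) = T₁.f u + t + ε := by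
    intro t ht
    simp only [hγ, hS1, T₁.f_up u t ht]
  set Tstar : ℝ := T₂.f w - ε - T₁.f u with hTstar
  have hw'f : T₂.f w' < T₂.f w := T₂.f_strictMono w' w hlew hne
  have hT0 : 0 < Tstar := by
    have : T₂.f w' = T₁.f u + ε := by rw [← hu, hS1]
    simp only [hTstar]; linarith
  set S : Set ℝ := {t | 0 ≤ t ∧ T₂.le (γ t) w} with hS
  have h0S : (0 : ℝ) ∈ S := ⟨le_rfl, by simp only [hγ, hup0, hu]; exact hlew⟩
  have hSne : S.Nonempty := ⟨0, h0S⟩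
  have hS_lt : ∀ t ∈ S, t < Tstar := by
    rintro t ⟨ht0, htle⟩
    have hne' : γ t ≠ w := by
      intro h; exact hw ⟨T₁.up u t, h⟩
    have := T₂.f_strictMono _ _ htle hne'
    rw [hγf t ht0] at this
    simp only [hTstar]; linarith
  have hbdd : BddAbove S := ⟨Tstar, fun t ht => (hS_lt t ht).le⟩
  set s : ℝ := sSup S with hs
  have hs0 : 0 ≤ s := le_csSup hbdd h0S
  have hsT : s ≤ Tstar := csSup_le hSne (fun t ht => (hS_lt t ht).le)
  -- generic step: for R > 0, get t ∈ S close to s with dist (γ s) (γ t) < R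
  have hstep : ∀ R : ℝ, 0 < R → ∃ t ∈ S, t ≤ s ∧ T₂.dist (γ s) (γ t) < R := by
    intro R hR
    obtain ⟨r, hr, hcr⟩ := hcont (T₁.up u s) R hR
    obtain ⟨t, htS, htgt⟩ := exists_lt_of_lt_csSup hSne (by linarith : s - r < s)
    have hts : t ≤ s := le_csSup hbdd htS
    refine ⟨t, htS, hts, hcr _ ?_⟩
    rw [T₁.dist_up u hs0 htS.1, abs_of_nonneg (by linarith)]
    linarith
  rcases lt_or_eq_of_le hsT with hslt | hseq
  · -- s < Tstar : derive contradiction via closed/open argument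
    have hfs : T₂.f (γ s) = T₁.f u + s + ε := hγf s hs0
    have hRpos : 0 < T₂.f w - T₂.f (γ s) := by rw [hfs]; simp only [hTstar] at hslt; linarith
    -- closedness: γ s ⪯ w
    obtain ⟨t, htS, hts, hdist⟩ := hstep _ hRpos
    have hft : T₂.f (γ t) = T₁.f u + t + ε := hγf t htS.1
    have hmin : min (T₂.f (γ s)) (T₂.f (γ t)) = T₂.f (γ t) := by
      rw [hfs, hft]; exact min_eq_right (by linarith)
    unfold MergeTree.dist at hdist
    rw [hmin] at hdist
    have hm_le : T₂.f (T₂.nca (γ s) (γ t)) ≤ T₂.f w := by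
      have h1 : T₂.f (γ t) ≤ T₂.f (γ s) := by rw [hft, hfs]; linarith
      linarith
    have hmw : T₂.le (T₂.nca (γ s) (γ t)) w :=
      T₂.le_of_common_desc (T₂.le_nca_right _ _) htS.2 hm_le
    have hsw : T₂.le (γ s) w := T₂.le_trans _ _ _ (T₂.le_nca_left _ _) hmw
    -- openness: find t' > s in S
    obtain ⟨r, hr, hcr⟩ := hcont (T₁.up u s) _ hRpos
    have ht'0 : 0 ≤ s + r / 2 := by linarith
    have hdist' : T₂.dist (γ s) (γ (s + r / 2)) < T₂.f w - T₂.f (γ s) := by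
      apply hcr
      rw [T₁.dist_up u hs0 ht'0, abs_of_nonpos (by linarith)]
      linarith
    have hft' : T₂.f (γ (s + r / 2)) = T₁.f u + (s + r / 2) + ε := hγf _ ht'0
    have hmin' : min (T₂.f (γ s)) (T₂.f (γ (s + r / 2))) = T₂.f (γ s) := by
      rw [hfs, hft']; exact min_eq_left (by linarith)
    unfold MergeTree.dist at hdist'
    rw [hmin'] at hdist'
    have hm_le' : T₂.f (T₂.nca (γ s) (γ (s + r / 2))) ≤ T₂.f w := by linarith
    have hmw' : T₂.le (T₂.nca (γ s) (γ (s + r / 2))) w :=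
      T₂.le_of_common_desc (T₂.le_nca_left _ _) hsw hm_le'
    have ht'S : (s + r / 2) ∈ S :=
      ⟨ht'0, T₂.le_trans _ _ _ (T₂.le_nca_right _ _) hmw'⟩
    have : s + r / 2 ≤ s := le_csSup hbdd ht'S
    linarith
  · -- s = Tstar : show w = γ s ∈ range α
    have hfs : T₂.f (γ s) = T₂.f w := by
      rw [hγf s hs0, hseq]; simp only [hTstar]; ring
    have hkey : ∀ R : ℝ, 0 < R → T₂.f (T₂.nca w (γ s)) ≤ T₂.f w + R := by
      intro R hR
      obtain ⟨t, htS, hts, hdist⟩ := hstep R hR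
      have hft : T₂.f (γ t) = T₁.f u + t + ε := hγf t htS.1
      have htlt : t < Tstar := hS_lt t htS
      have hftw : T₂.f (γ t) < T₂.f w := by rw [hft]; simp only [hTstar] at htlt; linarith
      have hmin : min (T₂.f (γ s)) (T₂.f (γ t)) = T₂.f (γ t) := by
        rw [hfs]; exact min_eq_right hftw.le
      unfold MergeTree.dist at hdist
      rw [hmin] at hdist
      rcases le_total (T₂.f (T₂.nca (γ s) (γ t))) (T₂.f w) with hc | hc
      · have hmw : T₂.le (T₂.nca (γ s) (γ t)) w :=
          T₂.le_of_common_desc (T₂.le_nca_right _ _) htS.2 hc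
        have hsw : T₂.le (γ s) w := T₂.le_trans _ _ _ (T₂.le_nca_left _ _) hmw
        have : T₂.nca w (γ s) = w :=
          T₂.le_antisymm _ _ (T₂.nca_min w (γ s) w (T₂.le_refl w) hsw) (T₂.le_nca_left _ _)
        rw [this]; linarith
      · have hwm : T₂.le w (T₂.nca (γ s) (γ t)) :=
          T₂.le_of_common_desc htS.2 (T₂.le_nca_right _ _) hc
        have : T₂.le (T₂.nca w (γ s)) (T₂.nca (γ s) (γ t)) :=
          T₂.nca_min w (γ s) _ hwm (T₂.le_nca_left _ _)
        have := T₂.f_mono this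
        linarith
    have hle1 : T₂.f (T₂.nca w (γ s)) ≤ T₂.f w :=
      le_of_forall_pos_le_add hkey
    have hncaw : T₂.nca w (γ s) = w :=
      (T₂.eq_of_le_of_f_le (T₂.le_nca_left w (γ s)) hle1).symm
    have hsw : T₂.le (γ s) w := by
      rw [← hncaw]; exact T₂.le_nca_right w (γ s)
    have : γ s = w := T₂.eq_of_le_of_f_le hsw (by linarith)
    exact hw ⟨T₁.up u s, this⟩
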